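/- Let x = (x₁, x₂) and y = (y₁, y₂) be binary words formed by concatenation, where x₁, y₁ have length k and x₂, y₂ have length r. Then d_ID(x₁, y₁) + d_ID(x₂, y₂) − 2·min(k, r) ≤ d_ID(x, y) ≤ d_ID(x₁, y₁) + d_ID(x₂, y₂). -/

import Mathlib

/-!
Since `d_ID(x, y) = |x| + |y| - 2 LCS(x, y)`, both bounds are bounds on the LCS of the
concatenations. Concatenating longest common subsequences of the halves gives a common
subsequence of the whole words, hence the upper bound on `d_ID`. Conversely, a longest common
subsequence of the whole words splits at the cuts of both words; the piece between the two cuts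
is a subsequence of the second half of one word and of the first half of the other, so it has
length at most `min(k, r)`, and the remaining pieces are common subsequences of the halves.
-/

/-- Length of a longest common subsequence of two binary words. -/
noncomputable def lcsLen (x y : List Bool) : ℕ :=
  sSup {n | ∃ z : List Bool, z.length = n ∧ z.Sublist x ∧ z.Sublist y}

/-- The insdel distance `d_ID(x,y) = |x| + |y| - 2·LCS(x,y)`. -/
noncomputable def dID (x y : List Bool) : ℕ :=
  x.length + y.length - 2 * lcsLen x y

/-- Number of runs (maximal blocks of consecutive equal symbols) of a binary word. -/
def runs (x : List Bool) : ℕ := (x.destutter (· ≠ ·)).length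

/-- Maximum run length of a binary word: the largest `n` such that some constant
word of length `n` occurs as a block of consecutive symbols of `x`. -/
noncomputable def maxRun (x : List Bool) : ℕ :=
  sSup {n | ∃ b : Bool, (List.replicate n b).IsInfix x}

/-- `D_t(x)`: the words of length `|x| - t` that are subsequences of `x`. -/
def Dset (t : ℕ) (x : List Bool) : Set (List Bool) :=
  {z | z.length = x.length - t ∧ z.Sublist x}

/-- `I_t(x)`: the words of length `|x| + t` that are supersequences of `x`. -/
def Iset (t : ℕ) (x : List Bool) : Set (List Bool) :=
  {z | z.length = x.length + t ∧ x.Sublist z}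

/-- A systematic encoding `x ↦ (x, p(x))` with redundancy words `p x` of length `r`
is a function-correcting insdel code for `f` correcting `t` insdel errors. -/
noncomputable def IsFCIDC {k : ℕ} {S : Type*} (f : (Fin k → Bool) → S) (t r : ℕ)
    (p : (Fin k → Bool) → List Bool) : Prop :=
  (∀ x, (p x).length = r) ∧
  ∀ x y, f x ≠ f y → 2 * t < dID (List.ofFn x ++ p x) (List.ofFn y ++ p y)

/-- The optimal redundancy `r^f_ID(k,t)`. -/
noncomputable def optRed {k : ℕ} {S : Type*} (f : (Fin k → Bool) → S) (t : ℕ) : ℕ :=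
  sInf {r | ∃ p, IsFCIDC f t r p}

/-- `p` is an irregular insdel-distance code of length `r` for the matrix `I`. -/
noncomputable def IsIrregularCode {M : ℕ} (I : Fin M → Fin M → ℕ) (r : ℕ)
    (p : Fin M → List Bool) : Prop :=
  (∀ i, (p i).length = r) ∧ ∀ i j, I i j ≤ dID (p i) (p j)

/-- `N^(1)_ID(I)`: least length of an irregular insdel-distance code for `I`. -/
noncomputable def N1 {M : ℕ} (I : Fin M → Fin M → ℕ) : ℕ :=
  sInf {r | ∃ p, IsIrregularCode I r p}

/-- `N^(2)_ID(I; K)`: least length `r ≥ K` of an irregular insdel-distance code for `I`. -/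
noncomputable def N2 {M : ℕ} (I : Fin M → Fin M → ℕ) (K : ℕ) : ℕ :=
  sInf {r | K ≤ r ∧ ∃ p, IsIrregularCode I r p}

-- The insdel distance matrix `I_f^(1)(t, x₁, …, x_M)`.
open Classical in
noncomputable def Imat1 {k M : ℕ} {S : Type*} (f : (Fin k → Bool) → S) (t : ℕ)
    (x : Fin M → Fin k → Bool) : Fin M → Fin M → ℕ :=
  fun i j => if f (x i) ≠ f (x j) then
    2 * t + 2 - dID (List.ofFn (x i)) (List.ofFn (x j)) else 0

-- The insdel distance matrix `I_f^(2)(t, x₁, …, x_M)`.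
open Classical in
noncomputable def Imat2 {k M : ℕ} {S : Type*} (f : (Fin k → Bool) → S) (t : ℕ)
    (x : Fin M → Fin k → Bool) : Fin M → Fin M → ℕ :=
  fun i j => if f (x i) ≠ f (x j) then
    2 * t + 2 + 2 * k - dID (List.ofFn (x i)) (List.ofFn (x j)) else 0

/-- The function distance `d^f_ID(a,b)`. -/
noncomputable def dfID {k : ℕ} {S : Type*} (f : (Fin k → Bool) → S) (a b : S) : ℕ :=
  sInf {d | ∃ x y : Fin k → Bool, f x = a ∧ f y = b ∧ dID (List.ofFn x) (List.ofFn y) = d}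

/-- The function distance matrix `I_f^(2)(t, f₁, …, f_E)`, with entries
`max(2(t+1+k) − d^f_ID(f_i, f_j), 0)` off the diagonal and `0` on the diagonal. -/
noncomputable def funMat2 {k E : ℕ} {S : Type*} (f : (Fin k → Bool) → S) (t : ℕ)
    (fs : Fin E → S) : Fin E → Fin E → ℕ :=
  fun i j => if i = j then 0 else 2 * (t + 1 + k) - dfID f (fs i) (fs j)

/-- The uniform `M × M` matrix with off-diagonal entries `d` and zero diagonal. -/
def uniMat (M d : ℕ) : Fin M → Fin M → ℕ := fun i j => if i = j then 0 else d

/-- The number-of-runs function on `F_2^k`. -/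
def runsFn (k : ℕ) (x : Fin k → Bool) : ℕ := runs (List.ofFn x)

/-- The VT-syndrome function `f(x) = Σ_{j=1}^k j·x_j mod (k+1)`. -/
def vtFn (k : ℕ) (x : Fin k → Bool) : ℕ :=
  (∑ j : Fin k, ((j : ℕ) + 1) * (if x j then 1 else 0)) % (k + 1)

/-- The function ball `B^f_ID(u, ρ) = f(B_ID(u, ρ))`. -/
def fball {k : ℕ} {S : Type*} (f : (Fin k → Bool) → S) (u : Fin k → Bool) (ρ : ℕ) : Set S :=
  f '' {v : Fin k → Bool | dID (List.ofFn u) (List.ofFn v) ≤ ρ}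

/-- `V_ID(r, d)`: the maximum size of an insdel ball of (integer) radius `d`
among centers in `F_2^r`. -/
noncomputable def Vid (r : ℕ) (d : ℤ) : ℕ :=
  sSup (Set.range fun x : Fin r → Bool =>
    Nat.card {y : Fin r → Bool | (dID (List.ofFn x) (List.ofFn y) : ℤ) ≤ d})

lemma bddAbove_commonSublist_lengths (x y : List Bool) :
    BddAbove {n | ∃ z : List Bool, z.length = n ∧ z.Sublist x ∧ z.Sublist y} :=
  ⟨x.length, fun _ ⟨_, hz, hzx, _⟩ => hz ▸ hzx.length_le⟩

lemma exists_sublist_length_eq_lcsLen (x y : List Bool) :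
    ∃ z : List Bool, z.length = lcsLen x y ∧ z.Sublist x ∧ z.Sublist y := by
  refine Nat.sSup_mem ?_ (bddAbove_commonSublist_lengths x y)
  exact ⟨0, [], rfl, List.nil_sublist x, List.nil_sublist y⟩

lemma le_lcsLen {x y z : List Bool} (hzx : z.Sublist x) (hzy : z.Sublist y) :
    z.length ≤ lcsLen x y :=
  le_csSup (bddAbove_commonSublist_lengths x y) ⟨z, rfl, hzx, hzy⟩

lemma lcsLen_comm (x y : List Bool) : lcsLen x y = lcsLen y x := by
  simp only [lcsLen, and_comm (a := List.Sublist _ x)]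

lemma lcsLen_le_length_left (x y : List Bool) : lcsLen x y ≤ x.length := by
  obtain ⟨z, hz, hzx, -⟩ := exists_sublist_length_eq_lcsLen x y
  exact hz ▸ hzx.length_le

lemma dID_eq (x y : List Bool) :
    (dID x y : ℤ) = x.length + y.length - 2 * lcsLen x y := by
  have := lcsLen_le_length_left x y
  have := lcsLen_comm x y ▸ lcsLen_le_length_left y x
  unfold dID
  omega

lemma add_lcsLen_le_lcsLen_append (x₁ y₁ x₂ y₂ : List Bool) :
    lcsLen x₁ y₁ + lcsLen x₂ y₂ ≤ lcsLen (x₁ ++ x₂) (y₁ ++ y₂) := by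
  obtain ⟨z₁, hz₁, h₁x, h₁y⟩ := exists_sublist_length_eq_lcsLen x₁ y₁
  obtain ⟨z₂, hz₂, h₂x, h₂y⟩ := exists_sublist_length_eq_lcsLen x₂ y₂
  simpa only [List.length_append, hz₁, hz₂] using le_lcsLen (h₁x.append h₂x) (h₁y.append h₂y)

lemma length_append_append_le_of_sublist {x₁ x₂ y₁ y₂ a e d : List Bool}
    (ha : a.Sublist x₁) (hed : (e ++ d).Sublist x₂) (hae : (a ++ e).Sublist y₁)
    (hd : d.Sublist y₂) :
    (a ++ e ++ d).length ≤ lcsLen x₁ y₁ + lcsLen x₂ y₂ + min y₁.length x₂.length := by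
  have ha' : a.length ≤ lcsLen x₁ y₁ := le_lcsLen ha ((List.sublist_append_left a e).trans hae)
  have hd' : d.length ≤ lcsLen x₂ y₂ := le_lcsLen ((List.sublist_append_right e d).trans hed) hd
  have hey : e.length ≤ y₁.length := ((List.sublist_append_right a e).trans hae).length_le
  have hex : e.length ≤ x₂.length := ((List.sublist_append_left e d).trans hed).length_le
  simp only [List.length_append]
  omega

lemma lcsLen_append_le (x₁ y₁ x₂ y₂ : List Bool) :
    lcsLen (x₁ ++ x₂) (y₁ ++ y₂) ≤ lcsLen x₁ y₁ + lcsLen x₂ y₂ +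
      max (min y₁.length x₂.length) (min x₁.length y₂.length) := by
  obtain ⟨z, hz, hzx, hzy⟩ := exists_sublist_length_eq_lcsLen (x₁ ++ x₂) (y₁ ++ y₂)
  obtain ⟨a, b, rfl, ha, hb⟩ := List.sublist_append_iff.mp hzx
  obtain ⟨c, d, hcd, hc, hd⟩ := List.sublist_append_iff.mp hzy
  rcases List.append_eq_append_iff.mp hcd with ⟨e, rfl, rfl⟩ | ⟨e, rfl, rfl⟩
  · have := length_append_append_le_of_sublist ha hb hc hd
    rw [List.append_assoc] at this
    omega
  · have := length_append_append_le_of_sublist hc hd ha hb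
    rw [lcsLen_comm y₁, lcsLen_comm y₂] at this
    omega

theorem stmt3 (k r : ℕ) (x₁ y₁ x₂ y₂ : List Bool)
    (hx₁ : x₁.length = k) (hy₁ : y₁.length = k)
    (hx₂ : x₂.length = r) (hy₂ : y₂.length = r) :
    (dID x₁ y₁ : ℤ) + (dID x₂ y₂ : ℤ) - 2 * min (k : ℤ) (r : ℤ)
      ≤ (dID (x₁ ++ x₂) (y₁ ++ y₂) : ℤ) ∧
    (dID (x₁ ++ x₂) (y₁ ++ y₂) : ℤ) ≤ (dID x₁ y₁ : ℤ) + (dID x₂ y₂ : ℤ) := by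
  have hlb := add_lcsLen_le_lcsLen_append x₁ y₁ x₂ y₂
  have hub := lcsLen_append_le x₁ y₁ x₂ y₂
  rw [hx₁, hy₁, hx₂, hy₂, max_self] at hub
  simp only [dID_eq, List.length_append]
  constructor <;> omega
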